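/- Let u = ∑_{i,j=1}^n u_{ij} x_i x_j be a quadratic element with invertible coefficient matrix (u_{ij}), and set w = u·z in the variables x_1,…,x_n,z. Then the cyclic derivatives of w are ∂_z(w) = u and ∂_{x_i}(w) = ∑_{j=1}^n (u_{ij} x_j z + u_{ji} z x_j) for 1 ≤ i ≤ n; these n+1 elements are linearly independent, so the space of relations R of A(w) has dimension n+1. -/

import Mathlib

open scoped TensorProduct BigOperators
noncomputable section

/-- The free associative algebra on `n` (degree-one) variables, realized as the
monoid algebra of the free monoid on `Fin n`. -/
abbrev FA (k : Type*) [CommRing k] (n : ℕ) := MonoidAlgebra k (FreeMonoid (Fin n))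

namespace FA

variable {k : Type*} [CommRing k] {n : ℕ}

/-- The monomial (word) `x_{p 0} x_{p 1} ⋯` associated to a list of indices. -/
def word (p : List (Fin n)) : FA k n := MonoidAlgebra.single (FreeMonoid.ofList p) 1

/-- The generator `x_i`. -/
def X (i : Fin n) : FA k n := word [i]

/-- Cyclic sum of a monomial: `c(a_1⋯a_r) = ∑_i a_i⋯a_r a_1⋯a_{i-1}`. -/
def cycWord (p : List (Fin n)) : FA k n :=
  ∑ i ∈ Finset.range p.length, word (p.rotate i)

/-- Cyclic sum operator `c : T(V) → T(V)`, extended linearly from monomials. -/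
def cyc (f : FA k n) : FA k n :=
  f.coeff.sum fun p a => a • cycWord (FreeMonoid.toList p)

/-- Cyclic derivative of a monomial: `∂_x(p) = ∑_{p = u x v} v u`. -/
def cycDerWord (x : Fin n) (p : List (Fin n)) : FA k n :=
  ∑ i ∈ Finset.range p.length,
    if p[i]? = some x then word (p.drop (i + 1) ++ p.take i) else 0

/-- Cyclic derivative `∂_x : T(V) → T(V)`, extended linearly from monomials. -/
def cycDer (x : Fin n) (f : FA k n) : FA k n :=
  f.coeff.sum fun p a => a • cycDerWord x (FreeMonoid.toList p)

/-- Ordinary partial derivative of a monomial: `∂p/∂x = ∑_{p = u x v} u ⊗ v`. -/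
def pderWord (x : Fin n) (p : List (Fin n)) : FA k n ⊗[k] FA k n :=
  ∑ i ∈ Finset.range p.length,
    if p[i]? = some x then (word (p.take i)) ⊗ₜ[k] (word (p.drop (i + 1))) else 0

/-- Ordinary partial derivative `∂/∂x : T(V) → T(V) ⊗ T(V)`, extended linearly. -/
def pder (x : Fin n) (f : FA k n) : FA k n ⊗[k] FA k n :=
  f.coeff.sum fun p a => a • pderWord x (FreeMonoid.toList p)

/-- `f` is homogeneous of degree `r`: every monomial in its support is a word of length `r`. -/
def IsHomog (r : ℕ) (f : FA k n) : Prop :=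
  ∀ p ∈ f.coeff.support, (FreeMonoid.toList p).length = r

end FA

/-! The monomials of `w = u z` are the words `x_i x_j z`, and the cyclic derivative of a word
`a b c` is `[a = y] b c + [b = y] c a + [c = y] a b`; this gives both formulas. The coefficient of
`x_j z` in `∂_{x_i} w` is `u_{ij}`, whereas `u` has no such monomial. Hence the `∂_{x_i} w` are
linearly independent because the rows of `(u_{ij})` are, and `u ≠ 0` is not in their span, since
reading off the coefficients of the `x_j z` is injective on that span and kills `u`. -/

namespace FA

variable {k : Type*} [CommRing k] {n : ℕ}

def cycDerLinear (x : Fin n) : FA k n →ₗ[k] FA k n :=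
  Finsupp.linearCombination k (fun p => cycDerWord x (FreeMonoid.toList p)) ∘ₗ
    (MonoidAlgebra.coeffLinearEquiv k).toLinearMap

theorem cycDer_sum {ι : Type*} (x : Fin n) (s : Finset ι) (f : ι → FA k n) :
    cycDer x (∑ i ∈ s, f i) = ∑ i ∈ s, cycDer x (f i) :=
  map_sum (cycDerLinear x) f s

theorem cycDer_smul (x : Fin n) (c : k) (f : FA k n) : cycDer x (c • f) = c • cycDer x f :=
  map_smul (cycDerLinear x) c f

theorem word_mul (p q : List (Fin n)) : (word p * word q : FA k n) = word (p ++ q) := by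
  rw [word, word, MonoidAlgebra.single_mul_single, mul_one]
  rfl

theorem X_mul_X (a b : Fin n) : (X a * X b : FA k n) = word [a, b] :=
  word_mul [a] [b]

theorem X_mul_X_mul_X (a b c : Fin n) : (X a * X b * X c : FA k n) = word [a, b, c] := by
  rw [X_mul_X, X, word_mul]
  rfl

theorem coeff_word (p q : List (Fin n)) :
    (word p : FA k n).coeff (FreeMonoid.ofList q) = if p = q then 1 else 0 := by
  classical
  rw [word, MonoidAlgebra.coeff_single, Finsupp.single_apply]
  simp only [EmbeddingLike.apply_eq_iff_eq]

theorem coeff_X_mul_X (a b c d : Fin n) :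
    (X a * X b : FA k n).coeff (FreeMonoid.of c * FreeMonoid.of d) =
      if a = c ∧ b = d then 1 else 0 := by
  rw [X_mul_X, show FreeMonoid.of c * FreeMonoid.of d = FreeMonoid.ofList [c, d] from rfl,
    coeff_word]
  simp only [List.cons.injEq, and_true]

theorem cycDer_word (x : Fin n) (p : List (Fin n)) :
    cycDer x (word p : FA k n) = cycDerWord x p := by
  rw [word, cycDer, MonoidAlgebra.coeff_single, Finsupp.sum_single_index (by rw [zero_smul]),
    one_smul]
  rfl

theorem cycDer_X_mul_X_mul_X (y a b c : Fin n) :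
    cycDer y (X a * X b * X c : FA k n) =
      (if a = y then X b * X c else 0) + (if b = y then X c * X a else 0) +
        (if c = y then X a * X b else 0) := by
  rw [X_mul_X_mul_X, cycDer_word]
  simp [cycDerWord, X_mul_X, Finset.sum_range_succ]

section Quadric

variable (U : Matrix (Fin n) (Fin n) k)

def quadric : FA k (n + 1) := ∑ i, ∑ j, U i j • (X i.castSucc * X j.castSucc)

theorem quadric_mul_X_last :
    quadric U * X (Fin.last n) =
      ∑ i, ∑ j, U i j • (X i.castSucc * X j.castSucc * X (Fin.last n) : FA k (n + 1)) := by
  simp only [quadric, Finset.sum_mul, smul_mul_assoc]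

theorem cycDer_last_quadric_mul_X_last :
    cycDer (Fin.last n) (quadric U * X (Fin.last n)) = quadric U := by
  rw [quadric_mul_X_last]
  simp [cycDer_sum, cycDer_smul, cycDer_X_mul_X_mul_X, (Fin.castSucc_lt_last _).ne, quadric]

theorem cycDer_castSucc_quadric_mul_X_last (i : Fin n) :
    cycDer i.castSucc (quadric U * X (Fin.last n)) =
      ∑ j, (U i j • (X j.castSucc * X (Fin.last n)) +
        U j i • (X (Fin.last n) * X j.castSucc)) := by
  rw [quadric_mul_X_last]
  simp [cycDer_sum, cycDer_smul, cycDer_X_mul_X_mul_X, (Fin.castSucc_lt_last _).ne',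
    Finset.sum_add_distrib, smul_ite]

theorem coeff_quadric (a b : Fin n) :
    (quadric U).coeff (FreeMonoid.of a.castSucc * FreeMonoid.of b.castSucc) = U a b := by
  simp [quadric, coeff_X_mul_X, ite_and, Finset.sum_ite_eq']

theorem quadric_ne_zero (hU : U ≠ 0) : quadric U ≠ 0 := by
  intro h
  apply hU
  ext a b
  simpa [h] using (coeff_quadric U a b).symm

/-- The coefficients of the monomials `x_j z`, where `z` is the last variable. -/
def coeffsXMulZ : FA k (n + 1) →ₗ[k] Fin n → k :=
  LinearMap.pi fun j =>
    Finsupp.lapply (FreeMonoid.of j.castSucc * FreeMonoid.of (Fin.last n)) ∘ₗ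
      (MonoidAlgebra.coeffLinearEquiv k).toLinearMap

theorem coeffsXMulZ_apply (f : FA k (n + 1)) (j : Fin n) :
    coeffsXMulZ f j = f.coeff (FreeMonoid.of j.castSucc * FreeMonoid.of (Fin.last n)) :=
  rfl

theorem coeffsXMulZ_quadric : coeffsXMulZ (quadric U) = 0 := by
  ext j
  simp [coeffsXMulZ_apply, quadric, coeff_X_mul_X]

theorem coeffsXMulZ_cycDer_castSucc_quadric_mul_X_last (i : Fin n) :
    coeffsXMulZ (cycDer i.castSucc (quadric U * X (Fin.last n))) = U i := by
  ext j
  simp [cycDer_castSucc_quadric_mul_X_last, coeffsXMulZ_apply, coeff_X_mul_X]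

end Quadric

section Field

variable {k : Type*} [Field k] {n : ℕ} {U : Matrix (Fin n) (Fin n) k}

theorem linearIndependent_coeffsXMulZ_cycDer_castSucc (hU : IsUnit U.det) :
    LinearIndependent k
      (coeffsXMulZ ∘ fun i : Fin n => cycDer i.castSucc (quadric U * X (Fin.last n))) := by
  rw [show coeffsXMulZ ∘ _ = U.row from funext (coeffsXMulZ_cycDer_castSucc_quadric_mul_X_last U)]
  exact Matrix.linearIndependent_rows_of_isUnit ((Matrix.isUnit_iff_isUnit_det U).mpr hU)

theorem linearIndependent_cycDer_castSucc_quadric_mul_X_last (hU : IsUnit U.det) :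
    LinearIndependent k fun i : Fin n => cycDer i.castSucc (quadric U * X (Fin.last n)) :=
  (linearIndependent_coeffsXMulZ_cycDer_castSucc hU).of_comp

theorem quadric_notMem_span_cycDer_castSucc (hU : IsUnit U.det) (hU₀ : U ≠ 0) :
    quadric U ∉ Submodule.span k
      (Set.range fun i : Fin n => cycDer i.castSucc (quadric U * X (Fin.last n))) := by
  have hdisj := Submodule.range_ker_disjoint (linearIndependent_coeffsXMulZ_cycDer_castSucc hU)
  exact fun h => quadric_ne_zero U hU₀ <|
    Submodule.disjoint_def.mp hdisj _ h (coeffsXMulZ_quadric U)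

end Field

end FA

open FA in
theorem quadric_potential_relations_general {k : Type*} [Field k] (n : ℕ)
    (hn : 2 ≤ n) (U : Matrix (Fin n) (Fin n) k) (hU : IsUnit U.det) :
    let x : Fin n → FA k (n + 1) := fun i => FA.X i.castSucc
    let z : FA k (n + 1) := FA.X (Fin.last n)
    let u : FA k (n + 1) := ∑ i, ∑ j, U i j • (x i * x j)
    let w : FA k (n + 1) := u * z
    FA.cycDer (Fin.last n) w = u ∧
    (∀ i : Fin n, FA.cycDer i.castSucc w =
        ∑ j, (U i j • (x j * z) + U j i • (z * x j))) ∧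
    LinearIndependent k (fun i : Fin (n + 1) => FA.cycDer i w) ∧
    Module.finrank k
      ↥(Submodule.span k (Set.range fun i : Fin (n + 1) => FA.cycDer i w)) = n + 1 := by
  intro x z u w
  have hU₀ : U ≠ 0 := by
    have : NeZero n := ⟨by omega⟩
    rintro rfl
    simp at hU
  have hz : cycDer (Fin.last n) w = u := cycDer_last_quadric_mul_X_last U
  have hLI : LinearIndependent k fun i => cycDer i w := by
    rw [← Fin.snoc_init_self fun i => cycDer i w, linearIndependent_finSnoc, hz]
    exact ⟨linearIndependent_cycDer_castSucc_quadric_mul_X_last hU,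
      quadric_notMem_span_cycDer_castSucc hU hU₀⟩
  exact ⟨hz, cycDer_castSucc_quadric_mul_X_last U, hLI,
    by rw [finrank_span_eq_card hLI, Fintype.card_fin]⟩

/-- For `w = u·z` with `u = ∑ u_{ij} xᵢxⱼ` non-degenerate: `∂_z(w) = u`,
`∂_{xᵢ}(w) = ∑ⱼ (u_{ij} xⱼz + u_{ji} z xⱼ)`, and these `n+1` cyclic derivatives are
linearly independent, so the space of relations `R` of `A(w)` has dimension `n+1`. -/
theorem quadric_potential_relations {k : Type*} [Field k] [CharZero k] (n : ℕ)
    (hn : 2 ≤ n) (U : Matrix (Fin n) (Fin n) k) (hU : IsUnit U.det) :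
    let x : Fin n → FA k (n + 1) := fun i => FA.X i.castSucc
    let z : FA k (n + 1) := FA.X (Fin.last n)
    let u : FA k (n + 1) := ∑ i, ∑ j, U i j • (x i * x j)
    let w : FA k (n + 1) := u * z
    FA.cycDer (Fin.last n) w = u ∧
    (∀ i : Fin n, FA.cycDer i.castSucc w =
        ∑ j, (U i j • (x j * z) + U j i • (z * x j))) ∧
    LinearIndependent k (fun i : Fin (n + 1) => FA.cycDer i w) ∧
    Module.finrank k
      ↥(Submodule.span k (Set.range fun i : Fin (n + 1) => FA.cycDer i w)) = n + 1 :=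
  quadric_potential_relations_general n hn U hU
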